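/- Let v > 0 and κ(θ) = κ(0)·e^{−vθ} with κ(0) > 0. Then κ is strictly decreasing, inf_θ κ(θ) = 0 < κ(1/n) for all n, and κ does not change sign. Moreover, for symmetric innovations with m = M and ess inf condition E[ξ]/m > −1, the FLVR ratio (−m·κ((j−j₀+1)/n))/(−m·κ((j−j₀+1)/n) + κ(1/n)(m + E[ξ])) tends to 0 as j → ∞ with n fixed, while the numerator is strictly negative for every finite j — hence the discretized Ornstein–Uhlenbeck market admits free lunch with vanishing risk but not arbitrage via this strategy. -/
import Mathlib


open Filter Set Real

/-- the Ornstein–Uhlenbeck kernel `κ(θ) = κ₀ e^{−vθ}` is strictly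
decreasing, positive (no sign change) with infimum 0, and the discretized market
admits FLVR (ratio → 0) but not arbitrage (numerator always negative). -/
theorem ou_kernel_flvr_not_arbitrage
    (v κ₀ : ℝ) (hv : 0 < v) (hκ₀ : 0 < κ₀)
    (κ : ℝ → ℝ) (hκ : ∀ θ : ℝ, κ θ = κ₀ * Real.exp (-v * θ)) :
    StrictAnti κ ∧
    (∀ θ : ℝ, 0 < κ θ) ∧
    Tendsto κ atTop (nhds 0) ∧
    (∀ n : ℕ, 1 ≤ n → 0 < κ (1 / (n : ℝ))) ∧
    ∀ m e : ℝ, 0 < m → -1 < e / m → ∀ n j₀ : ℕ, 1 ≤ n →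
      (Tendsto (fun j : ℕ =>
          (-m * κ (((j : ℝ) - j₀ + 1) / (n : ℝ))) /
            (-m * κ (((j : ℝ) - j₀ + 1) / (n : ℝ)) + κ (1 / (n : ℝ)) * (m + e)))
        atTop (nhds 0) ∧
      ∀ j : ℕ, -m * κ (((j : ℝ) - j₀ + 1) / (n : ℝ)) < 0) := by
  have hpos : ∀ θ : ℝ, 0 < κ θ := fun θ => by
    rw [hκ]; positivity
  have hanti : StrictAnti κ := by
    intro a b hab
    rw [hκ, hκ]
    exact mul_lt_mul_of_pos_left (Real.exp_lt_exp.mpr (by nlinarith)) hκ₀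
  have htop : Tendsto κ atTop (nhds 0) := by
    have h1 : Tendsto (fun θ : ℝ => v * θ) atTop atTop :=
      Tendsto.const_mul_atTop hv tendsto_id
    have h2 : Tendsto (fun θ : ℝ => Real.exp (-(v * θ))) atTop (nhds 0) :=
      Real.tendsto_exp_neg_atTop_nhds_zero.comp h1
    have h3 : Tendsto (fun θ : ℝ => κ₀ * Real.exp (-(v * θ))) atTop (nhds (κ₀ * 0)) :=
      h2.const_mul κ₀
    rw [mul_zero] at h3
    refine h3.congr fun θ => ?_
    rw [hκ, neg_mul]
  refine ⟨hanti, hpos, htop, fun n hn => hpos _, fun m e hm he n j₀ hn => ?_⟩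
  have hme : 0 < m + e := by
    have : -1 * m < e / m * m := by
      exact mul_lt_mul_of_pos_right he hm
    rw [div_mul_cancel₀ _ hm.ne'] at this
    linarith
  have hnpos : (0 : ℝ) < n := by exact_mod_cast hn
  constructor
  · have harg : Tendsto (fun j : ℕ => ((j : ℝ) - j₀ + 1) / (n : ℝ)) atTop atTop := by
      apply Tendsto.atTop_div_const hnpos
      have : Tendsto (fun j : ℕ => (j : ℝ)) atTop atTop := tendsto_natCast_atTop_atTop
      exact tendsto_atTop_add_const_right _ 1 (tendsto_atTop_add_const_right _ (-(j₀:ℝ)) this |>.congr fun j => by ring)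
    have hf : Tendsto (fun j : ℕ => κ (((j : ℝ) - j₀ + 1) / (n : ℝ))) atTop (nhds 0) :=
      htop.comp harg
    have hnum : Tendsto (fun j : ℕ => -m * κ (((j : ℝ) - j₀ + 1) / (n : ℝ))) atTop
        (nhds 0) := by
      have := hf.const_mul (-m)
      rwa [mul_zero] at this
    have hden : Tendsto (fun j : ℕ =>
        -m * κ (((j : ℝ) - j₀ + 1) / (n : ℝ)) + κ (1 / (n : ℝ)) * (m + e)) atTop
        (nhds (0 + κ (1 / (n : ℝ)) * (m + e))) := hnum.add_const _
    have hc : (0 : ℝ) + κ (1 / (n : ℝ)) * (m + e) ≠ 0 := by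
      have := mul_pos (hpos (1 / (n : ℝ))) hme
      positivity
    have := hnum.div hden hc
    rwa [zero_div] at this
  · intro j
    have := hpos (((j : ℝ) - j₀ + 1) / (n : ℝ))
    nlinarith
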